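/- For every δ₀ ∈ (0,1) there exists a constant δ = δ(δ₀) > 0 with the following property. Let P be a probability distribution over a finite alphabet 𝒜 = {a₁, a₂, …, a_{|𝒜|}}, let s ≥ 1 be an integer with 3/(sδ₀) < min{P(a₁), P(a₂)}, and let P̂ be an empirical type of denominator s (i.e., all P̂(a) are integer multiples of 1/s) such that min{ P̂(a₁)/P(a₁), P(a₂)/P̂(a₂) } ≥ δ₀ and P̂(a₂) ≥ 1/s. Define P̄ by P̄(a₁) = P̂(a₁) − 3/s, P̄(a₂) = P̂(a₂) + 3/s, and P̄(a_i) = P̂(a_i) for all other a_i. Then P^s(T(P̄)) ≥ δ · P^s(T(P̂)), where P^s is the s-fold product of P on 𝒜^s and T(P̂), T(P̄) are the sets of sequences in 𝒜^s whose empirical type is P̂, respectively P̄. -/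

import Mathlib

/-!
Write `P̂ = m / s` with letter counts `m`, and let `m'` be the counts of `P̄`. Pairs `(z, S)`,
where `z` has counts `m` and `S` is a set of `k` positions at which `z` reads `a₁`, correspond
bijectively (relabel `S` by `a₂`) to pairs `(z', S)` where `z'` has counts `m'` and reads `a₂` on
`S`. Hence `|T(m)| C(m a₁, k) = |T(m')| C(m' a₂, k)`; since moreover
`P^{m'} P(a₁)^k = P^m P(a₂)^k`, with `k = 3`
  `P^s(T(P̄)) / P^s(T(P̂)) = C(m a₁, 3) P(a₂)³ / (C(m a₂ + 3, 3) P(a₁)³)`.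
The hypotheses give `m a₁ ≥ s δ₀ P(a₁) > 3` and `δ₀ m a₂ ≤ s P(a₂)`, and comparing both binomial
coefficients with cubes bounds this ratio below by `δ₀⁶ / 64`.
-/

open scoped BigOperators

namespace Async

/-- `μ` is a probability distribution on a finite alphabet. -/
def IsDist {A : Type*} [Fintype A] (μ : A → ℝ) : Prop :=
  (∀ a, 0 ≤ μ a) ∧ ∑ a, μ a = 1

open scoped Classical in
/-- `P^s(T(V))`: the probability, under the `s`-fold product of `P`, of the type class
of `V`, i.e. of the set of sequences of length `s` whose empirical type is `V`. -/
noncomputable def typeProb {A : Type*} [Fintype A] (P : A → ℝ) (s : ℕ) (V : A → ℝ) : ℝ :=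
  ∑ z : Fin s → A,
    if (∀ a, ((Finset.univ.filter (fun j : Fin s => z j = a)).card : ℝ) / s = V a) then
      ∏ j, P (z j)
    else 0

open Finset

lemma six_mul_choose_three (n : ℕ) : 6 * (n + 2).choose 3 = (n + 2) * (n + 1) * n := by
  have := Nat.descFactorial_eq_factorial_mul_choose (n + 2) 3
  simp [Nat.descFactorial_succ, Nat.factorial] at this
  linarith

lemma cube_le_sixteen_mul_choose_three {n : ℕ} (hn : 4 ≤ n) :
    (n : ℝ) ^ 3 ≤ 16 * n.choose 3 := by
  obtain ⟨t, rfl⟩ : ∃ t, n = t + 4 := ⟨n - 4, by omega⟩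
  have h : (6 * (t + 4).choose 3 : ℝ) = (t + 4) * (t + 3) * (t + 2) := by
    exact_mod_cast six_mul_choose_three (t + 2)
  push_cast
  nlinarith [sq_nonneg (t : ℝ), (t.cast_nonneg : (0 : ℝ) ≤ t)]

lemma add_three_choose_three_le {n : ℕ} (hn : 1 ≤ n) :
    ((n + 3).choose 3 : ℝ) ≤ 4 * n ^ 3 := by
  have h : (6 * (n + 3).choose 3 : ℝ) = (n + 3) * (n + 2) * (n + 1) := by
    exact_mod_cast six_mul_choose_three (n + 1)
  have hn' : (1 : ℝ) ≤ n := by exact_mod_cast hn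
  nlinarith [mul_le_mul hn' hn' zero_le_one (by linarith : (0 : ℝ) ≤ n)]

lemma choose_three_mul_pow_le {δ₀ s p₁ p₂ : ℝ} {n₁ n₂ : ℕ} (hδ₀ : 0 ≤ δ₀) (hs : 0 ≤ s)
    (hp₁ : 0 ≤ p₁) (hp₂ : 0 ≤ p₂) (hn₁ : 4 ≤ n₁) (hn₂ : 1 ≤ n₂) (h₁ : s * δ₀ * p₁ ≤ n₁)
    (h₂ : δ₀ * n₂ ≤ s * p₂) :
    δ₀ ^ 6 / 64 * (n₂ + 3).choose 3 * p₁ ^ 3 ≤ n₁.choose 3 * p₂ ^ 3 := by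
  calc δ₀ ^ 6 / 64 * (n₂ + 3).choose 3 * p₁ ^ 3
      ≤ δ₀ ^ 6 / 64 * (4 * n₂ ^ 3) * p₁ ^ 3 := by gcongr; exact add_three_choose_three_le hn₂
    _ = (δ₀ * n₂) ^ 3 * (δ₀ * p₁) ^ 3 / 16 := by ring
    _ ≤ (s * p₂) ^ 3 * (δ₀ * p₁) ^ 3 / 16 := by gcongr
    _ = (s * δ₀ * p₁) ^ 3 * p₂ ^ 3 / 16 := by ring
    _ ≤ (n₁ : ℝ) ^ 3 * p₂ ^ 3 / 16 := by gcongr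
    _ ≤ n₁.choose 3 * p₂ ^ 3 := by
      have := cube_le_sixteen_mul_choose_three hn₁
      have : 0 ≤ p₂ ^ 3 := by positivity
      nlinarith

variable {A : Type*}

lemma typeProb_nonneg [Fintype A] {P : A → ℝ} (hP : ∀ a, 0 ≤ P a) (s : ℕ) (V : A → ℝ) :
    0 ≤ typeProb P s V :=
  sum_nonneg fun _ _ => by split_ifs; exacts [prod_nonneg fun _ _ => hP _, le_rfl]

section Recolor

variable {s : ℕ} {z : Fin s → A} {S : Finset (Fin s)} {b c : A}

lemma piecewise_piecewise_eq_self (hS : ∀ j ∈ S, z j = c) :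
    S.piecewise (fun _ => c) (S.piecewise (fun _ => b) z) = z := by
  rw [piecewise_idem_right, S.piecewise_congr (fun j hj => (hS j hj).symm) fun _ _ => rfl,
    piecewise_same]

variable [DecidableEq A]

lemma card_filter_piecewise_add (hS : ∀ j ∈ S, z j = c) (a : A) :
    #{j | S.piecewise (fun _ => b) z j = a} + (if a = c then #S else 0)
      = #{j | z j = a} + (if a = b then #S else 0) := by
  have sum_on_S (f : Fin s → A) (x : A) (hf : ∀ j ∈ S, f j = x) :
      ∑ j ∈ S, (if f j = a then 1 else 0) = if a = x then #S else 0 := by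
    rw [sum_congr rfl fun j hj => by rw [hf j hj]]
    simp [eq_comm]
  have off_S : ∑ j ∈ Sᶜ, (if S.piecewise (fun _ => b) z j = a then 1 else 0)
      = ∑ j ∈ Sᶜ, if z j = a then 1 else 0 :=
    sum_congr rfl fun j hj => by rw [S.piecewise_eq_of_notMem _ _ (mem_compl.1 hj)]
  rw [card_filter, card_filter, ← sum_add_sum_compl S,
    ← sum_add_sum_compl S (fun j => if z j = a then 1 else 0),
    sum_on_S _ b fun j hj => S.piecewise_eq_of_mem _ _ hj, sum_on_S z c hS, off_S]
  omega

end Recolor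

variable [DecidableEq A] {s k : ℕ} {m m' : A → ℕ} {a₁ a₂ : A}

def moveCounts (m : A → ℕ) (a₁ a₂ : A) (k : ℕ) : A → ℕ :=
  fun a => if a = a₁ then m a₁ - k else if a = a₂ then m a₂ + k else m a

lemma moveCounts_add_single (hne : a₁ ≠ a₂) (hk : k ≤ m a₁) :
    moveCounts m a₁ a₂ k + Pi.single a₁ k = m + Pi.single a₂ k := by
  ext a
  by_cases h₁ : a = a₁ <;> by_cases h₂ : a = a₂ <;>
    simp [moveCounts, h₁, h₂, hne, hne.symm] <;> omega

lemma moveCounts_div_eq {V : A → ℝ} (hV : ∀ a, V a = m a / s) (hk : k ≤ m a₁) :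
    (fun a => if a = a₁ then V a₁ - k / s else if a = a₂ then V a₂ + k / s else V a)
      = fun a => (moveCounts m a₁ a₂ k a : ℝ) / s := by
  ext a
  simp only [moveCounts]
  split_ifs
  · rw [hV, Nat.cast_sub hk]
    ring
  · rw [hV]
    push_cast
    ring
  · exact hV a

variable [Fintype A]

def typeClass (s : ℕ) (m : A → ℕ) : Finset (Fin s → A) :=
  {z | ∀ a, #{j | z j = a} = m a}

lemma mem_typeClass {z : Fin s → A} : z ∈ typeClass s m ↔ ∀ a, #{j | z j = a} = m a := by
  simp [typeClass]

lemma prod_comp_eq_prod_pow_card {M : Type*} [CommMonoid M] (f : A → M) (z : Fin s → A) :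
    ∏ j, f (z j) = ∏ a, f a ^ #{j | z j = a} := by
  simp_rw [← prod_fiberwise' univ z f, prod_const]

lemma typeProb_eq_card_typeClass_mul (P : A → ℝ) (hs : s ≠ 0) (m : A → ℕ) :
    typeProb P s (fun a => m a / s) = #(typeClass s m) * ∏ a, P a ^ m a := by
  have hs' : (s : ℝ) ≠ 0 := Nat.cast_ne_zero.2 hs
  rw [typeProb, ← sum_filter, ← nsmul_eq_mul, ← sum_const]
  refine sum_congr ?_ fun z hz => ?_
  · ext z
    simp only [typeClass, mem_filter, mem_univ, true_and, div_left_inj' hs', Nat.cast_inj]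
    -- the filters inside `typeProb` are decided classically
    convert Iff.rfl
  · simp_rw [prod_comp_eq_prod_pow_card, mem_typeClass.1 hz]

def markedTypeClass (s k : ℕ) (m : A → ℕ) (c : A) :
    Finset ((_ : Fin s → A) × Finset (Fin s)) :=
  (typeClass s m).sigma fun z => powersetCard k {j | z j = c}

lemma card_markedTypeClass (c : A) :
    #(markedTypeClass s k m c) = #(typeClass s m) * (m c).choose k := by
  rw [markedTypeClass, card_sigma,
    sum_const_nat fun z hz => by rw [card_powersetCard, mem_typeClass.1 hz c]]

lemma piecewise_mem_markedTypeClass (h : m' + Pi.single a₁ k = m + Pi.single a₂ k)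
    {p : (_ : Fin s → A) × Finset (Fin s)} (hp : p ∈ markedTypeClass s k m a₁) :
    ⟨p.2.piecewise (fun _ => a₂) p.1, p.2⟩ ∈ markedTypeClass s k m' a₂ := by
  obtain ⟨z, S⟩ := p
  simp only [markedTypeClass, mem_sigma, mem_powersetCard, mem_typeClass, subset_iff,
    mem_filter, mem_univ, true_and] at hp ⊢
  obtain ⟨hz, hS, rfl⟩ := hp
  refine ⟨fun a => ?_, fun j hj => S.piecewise_eq_of_mem _ _ hj, rfl⟩
  have hcount := card_filter_piecewise_add (b := a₂) hS a
  have ha := congrFun h a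
  simp only [Pi.add_apply, Pi.single_apply, hz a] at hcount ha
  omega

theorem card_typeClass_mul_choose (h : m' + Pi.single a₁ k = m + Pi.single a₂ k) :
    #(typeClass s m) * (m a₁).choose k = #(typeClass s m') * (m' a₂).choose k := by
  rw [← card_markedTypeClass, ← card_markedTypeClass]
  have hS {m : A → ℕ} {c : A} {p : (_ : Fin s → A) × Finset (Fin s)}
      (hp : p ∈ markedTypeClass s k m c) : ∀ j ∈ p.2, p.1 j = c := fun j hj =>
    (mem_filter.1 ((mem_powersetCard.1 (mem_sigma.1 hp).2).1 hj)).2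
  refine card_bij' (fun p _ => ⟨p.2.piecewise (fun _ => a₂) p.1, p.2⟩)
    (fun p _ => ⟨p.2.piecewise (fun _ => a₁) p.1, p.2⟩)
    (fun p hp => piecewise_mem_markedTypeClass h hp)
    (fun p hp => piecewise_mem_markedTypeClass h.symm hp) (fun p hp => ?_) (fun p hp => ?_)
  · simp only [piecewise_piecewise_eq_self (hS hp)]
  · simp only [piecewise_piecewise_eq_self (hS hp)]

lemma prod_pow_mul_pow_eq {M : Type*} [CommMonoid M] (f : A → M)
    (h : m' + Pi.single a₁ k = m + Pi.single a₂ k) :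
    (∏ a, f a ^ m' a) * f a₁ ^ k = (∏ a, f a ^ m a) * f a₂ ^ k := by
  have add_single (n : A → ℕ) (x : A) :
      (∏ a, f a ^ n a) * f x ^ k = ∏ a, f a ^ (n + Pi.single x k : A → ℕ) a := by
    simp only [Pi.add_apply, pow_add, prod_mul_distrib, Pi.single_apply, pow_ite, pow_zero,
      prod_ite_eq', mem_univ, if_true]
  rw [add_single, add_single, h]

theorem typeProb_mul_choose_mul_pow (P : A → ℝ) (hs : s ≠ 0)
    (h : m' + Pi.single a₁ k = m + Pi.single a₂ k) :
    typeProb P s (fun a => m a / s) * (m a₁).choose k * P a₂ ^ k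
      = typeProb P s (fun a => m' a / s) * (m' a₂).choose k * P a₁ ^ k := by
  have hcard : (#(typeClass s m) : ℝ) * (m a₁).choose k
      = #(typeClass s m') * (m' a₂).choose k := by
    exact_mod_cast card_typeClass_mul_choose h
  rw [typeProb_eq_card_typeClass_mul P hs, typeProb_eq_card_typeClass_mul P hs]
  linear_combination ((∏ a, P a ^ m a) * P a₂ ^ k) * hcard
    - (#(typeClass s m') * ((m' a₂).choose k : ℝ)) * prod_pow_mul_pow_eq P h

theorem mul_typeProb_le_typeProb_moveCounts {P : A → ℝ} (hP : ∀ a, 0 ≤ P a) (hs : s ≠ 0)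
    {δ₀ : ℝ} (hδ₀ : 0 ≤ δ₀) (hne : a₁ ≠ a₂) (hP₁ : 0 < P a₁) (hm₁ : 4 ≤ m a₁)
    (hm₂ : 1 ≤ m a₂) (h₁ : s * δ₀ * P a₁ ≤ m a₁) (h₂ : δ₀ * m a₂ ≤ s * P a₂) :
    δ₀ ^ 6 / 64 * typeProb P s (fun a => m a / s)
      ≤ typeProb P s (fun a => moveCounts m a₁ a₂ 3 a / s) := by
  have key :=
    typeProb_mul_choose_mul_pow P hs (moveCounts_add_single hne (by omega : 3 ≤ m a₁))
  rw [show moveCounts m a₁ a₂ 3 a₂ = m a₂ + 3 by simp [moveCounts, hne.symm]] at key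
  have hpos : (0 : ℝ) < (m a₂ + 3).choose 3 * P a₁ ^ 3 :=
    mul_pos (Nat.cast_pos.2 (Nat.choose_pos (by omega))) (pow_pos hP₁ 3)
  refine le_of_mul_le_mul_right ?_ hpos
  calc δ₀ ^ 6 / 64 * typeProb P s (fun a => m a / s) * ((m a₂ + 3).choose 3 * P a₁ ^ 3)
      = typeProb P s (fun a => m a / s) * (δ₀ ^ 6 / 64 * (m a₂ + 3).choose 3 * P a₁ ^ 3) := by
        ring
    _ ≤ typeProb P s (fun a => m a / s) * ((m a₁).choose 3 * P a₂ ^ 3) :=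
        mul_le_mul_of_nonneg_left
          (choose_three_mul_pow_le hδ₀ (Nat.cast_nonneg s) hP₁.le (hP a₂) hm₁ hm₂ h₁ h₂)
          (typeProb_nonneg hP s _)
    _ = typeProb P s (fun a => moveCounts m a₁ a₂ 3 a / s)
          * ((m a₂ + 3).choose 3 * P a₁ ^ 3) := by
        linear_combination key

theorem bucket_general (δ₀ : ℝ) (hδ₀0 : 0 < δ₀) :
    ∃ δ : ℝ, 0 < δ ∧
      ∀ (A : Type) [Fintype A] [DecidableEq A] (P : A → ℝ), IsDist P →
      ∀ (s : ℕ), 1 ≤ s → ∀ (a₁ a₂ : A), a₁ ≠ a₂ →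
      3 / (s * δ₀) < min (P a₁) (P a₂) →
      ∀ (Phat : A → ℝ), IsDist Phat → (∀ a, ∃ k : ℕ, Phat a = (k : ℝ) / s) →
      δ₀ ≤ min (Phat a₁ / P a₁) (P a₂ / Phat a₂) →
      1 / (s : ℝ) ≤ Phat a₂ →
      δ * typeProb P s Phat ≤
        typeProb P s (fun a =>
          if a = a₁ then Phat a₁ - 3 / s
          else if a = a₂ then Phat a₂ + 3 / s
          else Phat a) := by
  refine ⟨δ₀ ^ 6 / 64, by positivity, ?_⟩
  intro A _ _ P hP s hs a₁ a₂ hne hP₁₂ Phat _ hPhat hδ₀ hPhat₂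
  choose m hm using hPhat
  have hs₀ : (0 : ℝ) < s := by positivity
  have hP₁ : 3 / (s * δ₀) < P a₁ := hP₁₂.trans_le (min_le_left _ _)
  have hP₁pos : 0 < P a₁ := lt_of_le_of_lt (by positivity) hP₁
  have hm₂ : 1 ≤ m a₂ := by
    rwa [hm, div_le_div_iff_of_pos_right hs₀, Nat.one_le_cast] at hPhat₂
  have h₁ : s * δ₀ * P a₁ ≤ m a₁ := by
    have := hδ₀.trans (min_le_left _ _)
    rw [hm, le_div_iff₀ hP₁pos, le_div_iff₀ hs₀] at this
    linarith
  have h₂ : δ₀ * m a₂ ≤ s * P a₂ := by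
    have := hδ₀.trans (min_le_right _ _)
    rw [hm, div_div_eq_mul_div, le_div_iff₀ (by positivity)] at this
    linarith
  have hm₁ : 4 ≤ m a₁ := by
    rw [div_lt_iff₀ (by positivity)] at hP₁
    have : (3 : ℝ) < m a₁ := by linarith
    exact_mod_cast this
  have hPbar := moveCounts_div_eq (a₂ := a₂) hm (by omega : 3 ≤ m a₁)
  simp only [Nat.cast_ofNat] at hPbar
  rw [hPbar, funext hm]
  exact mul_typeProb_le_typeProb_moveCounts hP.1 (by omega) hδ₀0.le hne hP₁pos hm₁ hm₂ h₁ h₂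

/-- **Lemma 1 (bucket).** For every `δ₀ ∈ (0,1)` there is a `δ = δ(δ₀) > 0` such that:
for every finite alphabet `A`, distribution `P` on `A`, integer `s ≥ 1` with
`3/(sδ₀) < min{P(a₁),P(a₂)}`, and empirical type `P̂` of denominator `s` with
`min{P̂(a₁)/P(a₁), P(a₂)/P̂(a₂)} ≥ δ₀` and `P̂(a₂) ≥ 1/s`, the shifted type `P̄`
(moving mass `3/s` from `a₁` to `a₂`) satisfies `P^s(T(P̄)) ≥ δ · P^s(T(P̂))`. -/
theorem bucket (δ₀ : ℝ) (hδ₀0 : 0 < δ₀) (hδ₀1 : δ₀ < 1) :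
    ∃ δ : ℝ, 0 < δ ∧
      ∀ (A : Type) [Fintype A] [DecidableEq A] (P : A → ℝ), IsDist P →
      ∀ (s : ℕ), 1 ≤ s → ∀ (a₁ a₂ : A), a₁ ≠ a₂ →
      3 / (s * δ₀) < min (P a₁) (P a₂) →
      ∀ (Phat : A → ℝ), IsDist Phat → (∀ a, ∃ k : ℕ, Phat a = (k : ℝ) / s) →
      δ₀ ≤ min (Phat a₁ / P a₁) (P a₂ / Phat a₂) →
      1 / (s : ℝ) ≤ Phat a₂ →
      δ * typeProb P s Phat ≤
        typeProb P s (fun a =>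
          if a = a₁ then Phat a₁ - 3 / s
          else if a = a₂ then Phat a₂ + 3 / s
          else Phat a) :=
  bucket_general δ₀ hδ₀0

end Async
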